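/- arXiv:2505.04808 — 2 statements merged into one kernel-verified Lean document; each statement's English description precedes it below -/
import Mathlib

section
/- Let n, d be natural numbers and ε > 0 with d²ε < 1. Let λ₁ ≤ λ₂ ≤ ⋯ ≤ λₙ be real numbers in [-1,1] that are ε-dense on [-1,1], and let f : ℝ → ℝ satisfy ‖f‖∞ = 1. Then for every polynomial p ∈ 𝒫_d, the approximation error satisfies ∑_{i=1}^n |p(λᵢ) − f(λᵢ)| ≥ ‖p‖∞ (1 − d²ε) − 1. -/
/-- The sup norm of `g` over the interval `[-1, 1]`. -/
noncomputable def supNormIcc (g : ℝ → ℝ) : ℝ :=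
  sSup ((fun x => |g x|) '' Set.Icc (-1 : ℝ) 1)

/-!
A point `x₀` where `|p|` attains `‖p‖∞` lies within `ε` of some `λᵢ`, and by Markov's inequality
`p` is `d² ‖p‖∞`-Lipschitz on `[-1, 1]`; hence `|p(λᵢ)| ≥ ‖p‖∞ (1 - d² ε)`, and as `|f(λᵢ)| ≤ 1`
this single term of the sum already gives the bound.

Markov's inequality goes through Bernstein's: a trigonometric polynomial `t` of degree `n` with
`|t| ≤ M` has `|t'| ≤ n M`, for otherwise `t` minus a suitable sinusoid `M sin (n θ + β)` would have
`2 n + 1` zeros in a period. Applied to `p (cos θ)` this gives `|p'(x)| √(1 - x²) ≤ n M`, hence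
`|p'(x)| ≤ n² M` for `|x| ≤ cos (π / 2n)`. Closer to `±1`, Lagrange interpolation at the zeros of
the Chebyshev polynomial `Tₙ` bounds `|p'|` by `M Tₙ'`, and `|Tₙ'| ≤ n²`.
-/

open Polynomial Real Set Filter Topology

lemma exists_pos_of_hasDerivAt_pos {f : ℝ → ℝ} {f' x b : ℝ} (hf : HasDerivAt f f' x)
    (hf' : 0 < f') (hx : f x = 0) (hxb : x < b) : ∃ v ∈ Ioo x b, 0 < f v := by
  have hslope : ∀ᶠ v in 𝓝[>] x, 0 < slope f x v :=
    ((hasDerivAt_iff_tendsto_slope.1 hf).mono_left (nhdsGT_le_nhdsNE x)).eventually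
      (eventually_gt_nhds hf')
  obtain ⟨v, hv, hvb⟩ := (hslope.and (Ioo_mem_nhdsGT hxb)).exists
  exact ⟨v, hvb, pos_of_slope_pos hvb.1 hv hx⟩

lemma abs_sin_nat_mul_le (m : ℕ) (θ : ℝ) : |sin (m * θ)| ≤ m * |sin θ| := by
  induction m with
  | zero => simp
  | succ k ih =>
    push_cast
    rw [add_one_mul, sin_add]
    calc |sin (k * θ) * cos θ + cos (k * θ) * sin θ|
        ≤ |sin (k * θ)| * |cos θ| + |cos (k * θ)| * |sin θ| := by
          simpa only [abs_mul] using abs_add_le (sin (k * θ) * cos θ) (cos (k * θ) * sin θ)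
      _ ≤ k * |sin θ| * 1 + 1 * |sin θ| := by
          gcongr
          exacts [abs_cos_le_one θ, abs_cos_le_one _]
      _ = (k + 1) * |sin θ| := by ring

/-- `g` is a real trigonometric polynomial of degree at most `n`: with `z = e^{iθ}`, the function
`z ^ n * g θ` is a polynomial of degree at most `2 * n` in `z`. -/
def IsTrigPoly (n : ℕ) (g : ℝ → ℝ) : Prop :=
  ∃ Q : ℂ[X], Q.natDegree ≤ 2 * n ∧
    ∀ θ : ℝ, Q.eval (Complex.exp (θ * Complex.I)) = Complex.exp (θ * Complex.I) ^ n * g θ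

namespace IsTrigPoly

variable {m n : ℕ} {g h : ℝ → ℝ}

lemma mono (hg : IsTrigPoly m g) (hmn : m ≤ n) : IsTrigPoly n g := by
  obtain ⟨Q, hQ, hQg⟩ := hg
  refine ⟨X ^ (n - m) * Q, natDegree_mul_le.trans ?_, fun θ => ?_⟩
  · rw [natDegree_X_pow]; omega
  · rw [eval_mul, eval_pow, eval_X, hQg, ← mul_assoc, ← pow_add, Nat.sub_add_cancel hmn]

lemma add (hg : IsTrigPoly n g) (hh : IsTrigPoly n h) : IsTrigPoly n (g + h) := by
  obtain ⟨P, hP, hPg⟩ := hg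
  obtain ⟨Q, hQ, hQh⟩ := hh
  refine ⟨P + Q, (natDegree_add_le _ _).trans (max_le hP hQ), fun θ => ?_⟩
  rw [eval_add, hPg, hQh, Pi.add_apply, Complex.ofReal_add, mul_add]

lemma const_mul (hg : IsTrigPoly n g) (c : ℝ) : IsTrigPoly n fun θ => c * g θ := by
  obtain ⟨Q, hQ, hQg⟩ := hg
  refine ⟨C (c : ℂ) * Q, natDegree_C_mul_le _ _ |>.trans hQ, fun θ => ?_⟩
  rw [eval_mul, eval_C, hQg, Complex.ofReal_mul]
  ring

lemma neg (hg : IsTrigPoly n g) : IsTrigPoly n (-g) := by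
  convert hg.const_mul (-1) using 1
  ext θ
  simp

lemma sub (hg : IsTrigPoly n g) (hh : IsTrigPoly n h) : IsTrigPoly n (g - h) := by
  simpa [sub_eq_add_neg] using hg.add hh.neg

lemma mul (hg : IsTrigPoly m g) (hh : IsTrigPoly n h) : IsTrigPoly (m + n) (g * h) := by
  obtain ⟨P, hP, hPg⟩ := hg
  obtain ⟨Q, hQ, hQh⟩ := hh
  refine ⟨P * Q, natDegree_mul_le.trans (by omega), fun θ => ?_⟩
  rw [eval_mul, hPg, hQh, Pi.mul_apply, Complex.ofReal_mul]
  ring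

lemma sum {ι : Type*} (s : Finset ι) {f : ι → ℝ → ℝ} (hf : ∀ i ∈ s, IsTrigPoly n (f i)) :
    IsTrigPoly n (∑ i ∈ s, f i) :=
  Finset.sum_induction _ (IsTrigPoly n) (fun _ _ => add) ⟨0, by simp, by simp⟩ hf

lemma continuous (hg : IsTrigPoly n g) : Continuous g := by
  obtain ⟨Q, -, hQg⟩ := hg
  have hne : ∀ θ : ℝ, Complex.exp (θ * Complex.I) ^ n ≠ 0 := fun θ =>
    pow_ne_zero _ (Complex.exp_ne_zero _)
  have hg : g = fun θ : ℝ =>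
      (Q.eval (Complex.exp (θ * Complex.I)) / Complex.exp (θ * Complex.I) ^ n).re := by
    ext θ
    rw [hQg, mul_div_cancel_left₀ _ (hne θ), Complex.ofReal_re]
  rw [hg]
  exact Complex.continuous_re.comp <| ((Q.continuous.comp (by fun_prop)).div (by fun_prop) hne)

end IsTrigPoly

lemma isTrigPoly_const (c : ℝ) : IsTrigPoly 0 fun _ => c :=
  ⟨C (c : ℂ), by simp, by simp⟩

lemma isTrigPoly_cos : IsTrigPoly 1 Real.cos := by
  refine ⟨C (1 / 2 : ℂ) * (X ^ 2 + 1), natDegree_C_mul_le _ _ |>.trans ?_, fun θ => ?_⟩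
  · compute_degree!
  · simp only [eval_mul, eval_C, eval_add, eval_pow, eval_X, eval_one, pow_one,
      Complex.ofReal_cos, Complex.cos, neg_mul, Complex.exp_neg]
    field_simp

lemma isTrigPoly_cos_pow (k : ℕ) : IsTrigPoly k fun θ => Real.cos θ ^ k := by
  induction k with
  | zero => simpa using isTrigPoly_const 1
  | succ k ih =>
    convert ih.mul isTrigPoly_cos using 1
    ext θ
    simp [pow_succ]

lemma isTrigPoly_eval_cos {n : ℕ} {p : ℝ[X]} (hp : p.natDegree ≤ n) :
    IsTrigPoly n fun θ => p.eval (cos θ) := by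
  have := IsTrigPoly.sum (Finset.range (n + 1)) fun k hk =>
    ((isTrigPoly_cos_pow k).const_mul (p.coeff k)).mono (Nat.lt_succ_iff.1 (Finset.mem_range.1 hk))
  convert this using 1
  ext θ
  rw [eval_eq_sum_range' (Nat.lt_succ_of_le hp), Finset.sum_apply]

lemma isTrigPoly_sin_nat_mul_add (n : ℕ) (β : ℝ) : IsTrigPoly n fun θ => Real.sin (n * θ + β) := by
  refine ⟨C (Complex.exp (β * Complex.I) / (2 * Complex.I)) * X ^ (2 * n)
    - C (Complex.exp (-β * Complex.I) / (2 * Complex.I)), ?_, fun θ => ?_⟩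
  · compute_degree
  · have hexp : Complex.exp ((n * θ + β : ℝ) * Complex.I)
        = Complex.exp (θ * Complex.I) ^ n * Complex.exp (β * Complex.I) := by
      rw [← Complex.exp_nat_mul, ← Complex.exp_add]
      push_cast
      ring_nf
    simp only [eval_sub, eval_mul, eval_C, eval_pow, eval_X]
    rw [Complex.ofReal_sin, Complex.sin, neg_mul, Complex.exp_neg, neg_mul, Complex.exp_neg, hexp]
    field_simp
    ring_nf
    rw [Complex.I_sq]
    ring

namespace IsTrigPoly

variable {n : ℕ} {g : ℝ → ℝ}

lemma eq_zero_of_two_mul_lt_card (hg : IsTrigPoly n g) {a : ℝ} {s : Finset ℝ}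
    (hs : ↑s ⊆ Ico a (a + 2 * π)) (hzero : ∀ θ ∈ s, g θ = 0) (hcard : 2 * n < s.card) :
    g = 0 := by
  obtain ⟨Q, hQ, hQg⟩ := hg
  have hinj : InjOn (fun θ : ℝ => Complex.exp (θ * Complex.I)) s := fun x hx y hy hxy =>
    Circle.exp_injOn_Ico (by linarith) (hs hx) (hs hy) (Circle.ext hxy)
  have hQ0 : Q = 0 := by
    refine eq_zero_of_natDegree_lt_card_of_eval_eq_zero' Q
      (s.image fun θ : ℝ => Complex.exp (θ * Complex.I)) ?_ ?_
    · simp only [Finset.mem_image]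
      rintro _ ⟨θ, hθ, rfl⟩
      rw [hQg, hzero θ hθ, Complex.ofReal_zero, mul_zero]
    · rw [Finset.card_image_of_injOn hinj]; omega
  ext θ
  have := hQg θ
  rw [hQ0, eval_zero, eq_comm, mul_eq_zero] at this
  exact_mod_cast this.resolve_left (pow_ne_zero _ (Complex.exp_ne_zero _))

lemma eq_zero_of_alternating (hg : IsTrigPoly n g) {θ₀ : ℝ}
    (hθ₀ : g θ₀ = 0) {y : ℕ → ℝ} (hy : Monotone y) (hy₀ : θ₀ < y 0)
    (hy₂ₙ : y (2 * n) < θ₀ + 2 * π) (halt : ∀ j ≤ 2 * n, 0 < (-1) ^ j * g (y j)) : g = 0 := by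
  have hzero : ∀ j : Fin (2 * n), ∃ z ∈ Ioo (y j) (y (j + 1)), g z = 0 := by
    intro j
    have hj := halt j (by omega)
    have hj' := halt (j + 1) (by omega)
    rw [pow_succ, mul_neg_one, neg_mul, neg_pos] at hj'
    obtain ⟨z, hz, hgz⟩ := intermediate_value_Ioo' (hy (Nat.le_succ j))
      (continuous_const.mul hg.continuous).continuousOn ⟨hj', hj⟩
    exact ⟨z, hz, by simpa using hgz⟩
  choose z hz hgz using hzero
  have hz_mono : StrictMono z := fun i j hij =>
    ((hz i).2.trans_le (hy (Nat.succ_le_of_lt hij))).trans (hz j).1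
  refine hg.eq_zero_of_two_mul_lt_card (s := insert θ₀ (Finset.univ.image z)) (a := θ₀) ?_ ?_ ?_
  · intro θ hθ
    simp only [Finset.coe_insert, Finset.coe_image, Finset.coe_univ, image_univ, mem_insert_iff,
      mem_range] at hθ
    rcases hθ with rfl | ⟨j, rfl⟩
    · exact ⟨le_rfl, by linarith [pi_pos]⟩
    · exact ⟨(hy₀.trans_le (hy (Nat.zero_le _))).trans (hz j).1 |>.le,
        (hz j).2.trans_le (hy (by omega)) |>.trans hy₂ₙ⟩
  · simp only [Finset.mem_insert, Finset.mem_image, Finset.mem_univ, true_and]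
    rintro θ (rfl | ⟨j, rfl⟩)
    exacts [hθ₀, hgz j]
  · rw [Finset.card_insert_of_notMem, Finset.card_image_of_injective _ hz_mono.injective,
      Finset.card_univ, Fintype.card_fin]
    · omega
    · simp only [Finset.mem_image, Finset.mem_univ, true_and, not_exists]
      exact fun j h => (hy₀.trans_le (hy (Nat.zero_le _))).trans (hz j).1 |>.ne' h

lemma nonpos_of_hasDerivAt_of_alternating (hg : IsTrigPoly n g) (hn : 0 < n) {θ₀ g' : ℝ}
    (hθ₀ : g θ₀ = 0) (hg' : HasDerivAt g g' θ₀) {y : ℕ → ℝ} (hy : Monotone y) (hy₁ : θ₀ < y 1)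
    (hy₂ₙ : y (2 * n) < θ₀ + 2 * π) (halt : ∀ j, 0 < j → j ≤ 2 * n → 0 < (-1) ^ j * g (y j)) :
    g' ≤ 0 := by
  by_contra! hpos
  obtain ⟨v, hv, hgv⟩ := exists_pos_of_hasDerivAt_pos hg' hpos hθ₀ hy₁
  set y' := Function.update y 0 v
  have hy' : Monotone y' := by
    refine monotone_nat_of_le_succ fun j => ?_
    rcases j with _ | j
    · simpa [y'] using hv.2.le
    · simpa [y'] using hy (Nat.le_succ (j + 1))
  have hy'₂ₙ : y' (2 * n) < θ₀ + 2 * π := by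
    simpa [y', Function.update_of_ne (by omega : 2 * n ≠ 0)] using hy₂ₙ
  have halt' : ∀ j ≤ 2 * n, 0 < (-1) ^ j * g (y' j) := by
    rintro (_ | j) hj
    · simpa [y'] using hgv
    · simpa [y'] using halt (j + 1) j.succ_pos hj
  rw [hg.eq_zero_of_alternating hθ₀ hy' hv.1 hy'₂ₙ halt'] at hg'
  exact hpos.ne' (hg'.unique (hasDerivAt_const θ₀ 0))

lemma le_of_hasDerivAt_of_abs_lt (hg : IsTrigPoly n g) (hn : 0 < n) {M : ℝ}
    (hgM : ∀ θ, |g θ| < M) {g' θ₀ : ℝ} (hg' : HasDerivAt g g' θ₀) : g' ≤ n * M := by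
  by_contra! hlt
  have hn' : (0 : ℝ) < n := Nat.cast_pos.2 hn
  have hM : 0 < M := (abs_nonneg _).trans_lt (hgM 0)
  have hθ₀M : |g θ₀ / M| < 1 := by rw [abs_div, abs_of_pos hM, div_lt_one hM]; exact hgM θ₀
  set α := arcsin (g θ₀ / M)
  have hsinα : M * sin α = g θ₀ := by
    rw [sin_arcsin (abs_le.1 hθ₀M.le).1 (abs_le.1 hθ₀M.le).2]; field_simp
  have hα : -(π / 2) < α := neg_pi_div_two_lt_arcsin.2 (abs_lt.1 hθ₀M).1
  have hα' : α < π / 2 := arcsin_lt_pi_div_two.2 (abs_lt.1 hθ₀M).2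
  -- The sinusoid `s` of amplitude `M` meets `g` at `θ₀` with a smaller slope, while `g - s`
  -- alternates in sign at the `2 n` extrema of `s` in the following period.
  set s := fun θ => M * sin (n * θ + (α - n * θ₀))
  have hs' : HasDerivAt s (M * (n * cos α)) θ₀ := by
    have := (((hasDerivAt_id' θ₀).const_mul (n : ℝ)).add_const (α - n * θ₀)).sin.const_mul M
    rwa [show n * θ₀ + (α - n * θ₀) = α by ring, mul_one, mul_comm (cos α)] at this
  have hslope : M * (n * cos α) < g' := by
    nlinarith [mul_le_mul_of_nonneg_left (cos_le_one α) (by positivity : (0 : ℝ) ≤ M * n)]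
  set y : ℕ → ℝ := fun j => θ₀ + (j * π - π / 2 - α) / n
  have hy : StrictMono y := fun i j hij => by
    have : (i : ℝ) < j := Nat.cast_lt.2 hij
    simp only [y]
    gcongr
  have halt : ∀ j, 0 < (-1) ^ j * (g - s) (y j) := by
    intro j
    have harg : n * y j + (α - n * θ₀) = j * π - π / 2 := by simp only [y]; field_simp; ring
    have := abs_lt.1 (hgM (y j))
    simp only [s, Pi.sub_apply, harg, sin_sub_pi_div_two, cos_nat_mul_pi]
    rcases neg_one_pow_eq_or ℝ j with h | h <;> rw [h] <;> linarith
  have hy₁ : θ₀ < y 1 := by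
    have : 0 < (1 * π - π / 2 - α) / n := div_pos (by linarith) hn'
    simp only [y]
    linarith
  have hy₂ₙ : y (2 * n) < θ₀ + 2 * π := by
    have : (2 * n * π - π / 2 - α) / n < 2 * π := by rw [div_lt_iff₀ hn']; linarith
    simp only [y]
    push_cast
    linarith
  have hgs : IsTrigPoly n (g - s) := hg.sub ((isTrigPoly_sin_nat_mul_add n _).const_mul M)
  have := hgs.nonpos_of_hasDerivAt_of_alternating hn (by simp [s, hsinα]) (hg'.sub hs')
    hy.monotone hy₁ hy₂ₙ fun j _ _ => halt j
  linarith

lemma abs_le_of_hasDerivAt (hg : IsTrigPoly n g) (hn : 0 < n) {M : ℝ} (hgM : ∀ θ, |g θ| ≤ M)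
    {g' θ₀ : ℝ} (hg' : HasDerivAt g g' θ₀) : |g'| ≤ n * M := by
  have hn' : (0 : ℝ) < n := Nat.cast_pos.2 hn
  have hupper : ∀ {f : ℝ → ℝ} {f' : ℝ}, IsTrigPoly n f → (∀ θ, |f θ| ≤ M) → HasDerivAt f f' θ₀ →
      f' ≤ n * M := fun hf hfM hf' => le_of_forall_gt_imp_ge_of_dense fun c hc => by
    have hlt : ∀ θ, |_| < c / n := fun θ => (hfM θ).trans_lt (by rwa [lt_div_iff₀ hn', mul_comm])
    simpa [mul_div_cancel₀ c hn'.ne'] using hf.le_of_hasDerivAt_of_abs_lt hn hlt hf'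
  exact abs_le.2 ⟨by linarith [hupper hg.neg (by simpa using hgM) hg'.neg], hupper hg hgM hg'⟩

end IsTrigPoly

lemma abs_eval_le_mul_eval_of_degree_lt {ι : Type*} [DecidableEq ι] {s : Finset ι} {v : ι → ℝ}
    (hvs : InjOn v s) {q D : ℝ[X]} (hq : q.degree < s.card) (hD : D.degree < s.card) {M x : ℝ}
    (hsign : ∀ i ∈ s, 0 ≤ D.eval (v i) * (Lagrange.basis s v i).eval x)
    (hqD : ∀ i ∈ s, |q.eval (v i)| ≤ M * |D.eval (v i)|) : |q.eval x| ≤ M * D.eval x := by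
  have expand : ∀ f : ℝ[X], f.degree < s.card →
      f.eval x = ∑ i ∈ s, f.eval (v i) * (Lagrange.basis s v i).eval x := fun f hf => by
    conv_lhs => rw [Lagrange.eq_interpolate hvs hf]
    simp [Lagrange.interpolate_apply, eval_finsetSum]
  calc |q.eval x| ≤ ∑ i ∈ s, |q.eval (v i) * (Lagrange.basis s v i).eval x| := by
        rw [expand q hq]
        exact Finset.abs_sum_le_sum_abs _ _
    _ ≤ ∑ i ∈ s, M * (D.eval (v i) * (Lagrange.basis s v i).eval x) := by
        refine Finset.sum_le_sum fun i hi => ?_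
        rw [← abs_of_nonneg (hsign i hi), abs_mul, abs_mul, ← mul_assoc]
        exact mul_le_mul_of_nonneg_right (hqD i hi) (abs_nonneg _)
    _ = M * D.eval x := by rw [← Finset.mul_sum, expand D hD]

lemma neg_one_pow_mul_eval_basis_nonneg {n : ℕ} {v : ℕ → ℝ} (hv : StrictAntiOn v (Iio n))
    {k : ℕ} (hk : k < n) {x : ℝ} (hx : v 0 ≤ x) :
    0 ≤ (-1) ^ k * (Lagrange.basis (Finset.range n) v k).eval x := by
  set f := fun j => (v k - v j)⁻¹ * (x - v j)
  have hxv : ∀ j < n, 0 ≤ x - v j := fun j hj =>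
    sub_nonneg.2 <| (hv.antitoneOn (hk.trans_le' k.zero_le) hj j.zero_le).trans hx
  have heval : (Lagrange.basis (Finset.range n) v k).eval x
      = ∏ j ∈ (Finset.range n).erase k, f j := by
    simp [Lagrange.basis, Lagrange.basisDivisor, eval_prod, f]
  have hsplit : (Finset.range n).erase k = Finset.range k ∪ Finset.Ioo k n := by
    ext j
    simp only [Finset.mem_erase, Finset.mem_range, Finset.mem_union, Finset.mem_Ioo]
    omega
  have hdisj : Disjoint (Finset.range k) (Finset.Ioo k n) :=
    Finset.disjoint_left.2 fun j hj hj' => by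
      rw [Finset.mem_range] at hj; rw [Finset.mem_Ioo] at hj'; omega
  have hneg : (-1) ^ k * ∏ j ∈ Finset.range k, f j = ∏ j ∈ Finset.range k, -f j := by
    rw [Finset.prod_neg, Finset.card_range]
  rw [heval, hsplit, Finset.prod_union hdisj, ← mul_assoc, hneg]
  refine mul_nonneg (Finset.prod_nonneg fun j hj => ?_) (Finset.prod_nonneg fun j hj => ?_)
  · rw [Finset.mem_range] at hj
    have : v k < v j := hv (hj.trans hk) hk hj
    simp only [f, ← neg_mul, ← inv_neg, neg_sub]
    exact mul_nonneg (inv_nonneg.2 (by linarith)) (hxv j (hj.trans hk))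
  · rw [Finset.mem_Ioo] at hj
    have : v j < v k := hv hk hj.2 hj.1
    exact mul_nonneg (inv_nonneg.2 (by linarith)) (hxv j hj.2)

lemma derivative_T_eval_cos_mul_sin (n : ℕ) (θ : ℝ) :
    (derivative (Chebyshev.T ℝ n)).eval (cos θ) * sin θ = n * sin (n * θ) := by
  have hU := Chebyshev.U_real_cos θ ((n : ℤ) - 1)
  push_cast at hU
  rw [sub_add_cancel] at hU
  rw [Chebyshev.T_derivative_eq_U, eval_mul, mul_assoc, hU]
  simp

lemma abs_derivative_T_eval_le (n : ℕ) {x : ℝ} (hx : x ∈ Icc (-1 : ℝ) 1) :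
    |(derivative (Chebyshev.T ℝ n)).eval x| ≤ n ^ 2 := by
  have hclosed : IsClosed {x : ℝ | |(derivative (Chebyshev.T ℝ n)).eval x| ≤ n ^ 2} :=
    isClosed_le (Polynomial.continuous _).abs continuous_const
  refine closure_minimal (fun x hx => ?_) hclosed
    (by rwa [closure_Ioo (by norm_num : (-1 : ℝ) ≠ 1)])
  have hsin : 0 < sin (arccos x) :=
    sin_pos_of_pos_of_lt_pi (arccos_pos.2 hx.2) (arccos_lt_pi.2 hx.1)
  have h := derivative_T_eval_cos_mul_sin n (arccos x)
  rw [cos_arccos hx.1.le hx.2.le] at h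
  refine le_of_mul_le_mul_right ?_ hsin
  calc |(derivative (Chebyshev.T ℝ n)).eval x| * sin (arccos x) = n * |sin (n * arccos x)| := by
        rw [← abs_of_pos hsin, ← abs_mul, h, abs_mul, Nat.abs_cast]
    _ ≤ n * (n * |sin (arccos x)|) := by gcongr; exact abs_sin_nat_mul_le n _
    _ = n ^ 2 * sin (arccos x) := by rw [abs_of_pos hsin]; ring

lemma abs_derivative_eval_cos_mul_sin_le {n : ℕ} (hn : 0 < n) {p : ℝ[X]} (hp : p.natDegree ≤ n)
    {M : ℝ} (hM : ∀ x ∈ Icc (-1 : ℝ) 1, |p.eval x| ≤ M) (θ : ℝ) :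
    |(derivative p).eval (cos θ) * sin θ| ≤ n * M := by
  have := (isTrigPoly_eval_cos hp).abs_le_of_hasDerivAt hn
    (fun θ => hM _ ⟨neg_one_le_cos θ, cos_le_one θ⟩) ((p.hasDerivAt _).comp θ (hasDerivAt_cos θ))
  rwa [mul_neg, abs_neg] at this

noncomputable def chebyshevAngle (n k : ℕ) : ℝ := (2 * k + 1) * π / (2 * n)

/-- The zeros of the Chebyshev polynomial `T n`, in decreasing order. -/
noncomputable def chebyshevNode (n k : ℕ) : ℝ := cos (chebyshevAngle n k)

lemma chebyshevAngle_mem_Ioo {n k : ℕ} (hk : k < n) : chebyshevAngle n k ∈ Ioo 0 π := by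
  have hn : (0 : ℝ) < n := Nat.cast_pos.2 (k.zero_le.trans_lt hk)
  have hkn : (k : ℝ) + 1 ≤ n := by exact_mod_cast hk
  refine ⟨by unfold chebyshevAngle; positivity, ?_⟩
  rw [chebyshevAngle, div_lt_iff₀ (by positivity)]
  nlinarith [pi_pos]

lemma sin_chebyshevAngle_pos {n k : ℕ} (hk : k < n) : 0 < sin (chebyshevAngle n k) :=
  sin_pos_of_pos_of_lt_pi (chebyshevAngle_mem_Ioo hk).1 (chebyshevAngle_mem_Ioo hk).2

lemma chebyshevNode_zero (n : ℕ) : chebyshevNode n 0 = cos (π / (2 * n)) := by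
  simp [chebyshevNode, chebyshevAngle]

lemma chebyshevNode_strictAntiOn (n : ℕ) : StrictAntiOn (chebyshevNode n) (Iio n) := by
  intro j hj k hk hjk
  have hj' := chebyshevAngle_mem_Ioo hj
  have hk' := chebyshevAngle_mem_Ioo hk
  refine strictAntiOn_cos ⟨hj'.1.le, hj'.2.le⟩ ⟨hk'.1.le, hk'.2.le⟩ ?_
  have : (j : ℝ) < k := Nat.cast_lt.2 hjk
  have hn : (0 : ℝ) < n := Nat.cast_pos.2 (j.zero_le.trans_lt hj)
  unfold chebyshevAngle
  gcongr

lemma neg_one_pow_mul_derivative_T_eval_chebyshevNode {n k : ℕ} (hk : k < n) :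
    (-1) ^ k * (derivative (Chebyshev.T ℝ n)).eval (chebyshevNode n k) * sin (chebyshevAngle n k)
      = n := by
  have hn : (n : ℝ) ≠ 0 := Nat.cast_ne_zero.2 (k.zero_le.trans_lt hk).ne'
  rw [mul_assoc, chebyshevNode, derivative_T_eval_cos_mul_sin,
    show n * chebyshevAngle n k = k * π + π / 2 by unfold chebyshevAngle; field_simp,
    sin_add_pi_div_two, cos_nat_mul_pi, mul_left_comm, ← mul_pow]
  simp

lemma derivative_T_eval_chebyshevNode_mul_eval_basis_nonneg {n k : ℕ} (hk : k < n) {x : ℝ}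
    (hx : cos (π / (2 * n)) ≤ x) :
    0 ≤ (derivative (Chebyshev.T ℝ n)).eval (chebyshevNode n k) *
      (Lagrange.basis (Finset.range n) (chebyshevNode n) k).eval x := by
  have hD : 0 ≤ (-1) ^ k * (derivative (Chebyshev.T ℝ n)).eval (chebyshevNode n k) :=
    nonneg_of_mul_nonneg_left (neg_one_pow_mul_derivative_T_eval_chebyshevNode hk ▸ n.cast_nonneg)
      (sin_chebyshevAngle_pos hk)
  have hb := neg_one_pow_mul_eval_basis_nonneg (chebyshevNode_strictAntiOn n) hk
    ((chebyshevNode_zero n).trans_le hx)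
  have := mul_nonneg hD hb
  rwa [mul_mul_mul_comm, ← mul_pow, neg_one_mul, neg_neg, one_pow, one_mul] at this

lemma abs_derivative_eval_chebyshevNode_le {n k : ℕ} (hk : k < n) {p : ℝ[X]}
    (hp : p.natDegree ≤ n) {M : ℝ} (hM : ∀ x ∈ Icc (-1 : ℝ) 1, |p.eval x| ≤ M) :
    |(derivative p).eval (chebyshevNode n k)|
      ≤ M * |(derivative (Chebyshev.T ℝ n)).eval (chebyshevNode n k)| := by
  have hs := sin_chebyshevAngle_pos hk
  have hD : |(derivative (Chebyshev.T ℝ n)).eval (chebyshevNode n k)| * sin (chebyshevAngle n k)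
      = n := by
    simpa [abs_mul, abs_of_pos hs] using
      congrArg (|·|) (neg_one_pow_mul_derivative_T_eval_chebyshevNode hk)
  refine le_of_mul_le_mul_right ?_ hs
  calc |(derivative p).eval (chebyshevNode n k)| * sin (chebyshevAngle n k)
      = |(derivative p).eval (cos (chebyshevAngle n k)) * sin (chebyshevAngle n k)| := by
        rw [abs_mul, abs_of_pos hs, chebyshevNode]
    _ ≤ n * M := abs_derivative_eval_cos_mul_sin_le (k.zero_le.trans_lt hk) hp hM _
    _ = M * |(derivative (Chebyshev.T ℝ n)).eval (chebyshevNode n k)|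
          * sin (chebyshevAngle n k) := by
        rw [mul_assoc, hD, mul_comm]

lemma degree_derivative_lt_of_natDegree_le {n : ℕ} (hn : 0 < n) {p : ℝ[X]}
    (hp : p.natDegree ≤ n) : (derivative p).degree < n :=
  degree_le_natDegree.trans_lt <| Nat.cast_lt.2 <| (natDegree_derivative_le p).trans_lt (by omega)

lemma abs_derivative_eval_le_of_cos_le {n : ℕ} (hn : 0 < n) {p : ℝ[X]} (hp : p.natDegree ≤ n)
    {M : ℝ} (hM : ∀ x ∈ Icc (-1 : ℝ) 1, |p.eval x| ≤ M) {x : ℝ} (hx : cos (π / (2 * n)) ≤ x)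
    (hx₁ : x ≤ 1) : |(derivative p).eval x| ≤ n ^ 2 * M := by
  have hM₀ : 0 ≤ M := (abs_nonneg _).trans (hM 0 (by norm_num))
  -- To the right of all zeros of `T n`, every term of the Lagrange expansion of `T n'` at those
  -- zeros is nonnegative, while `|p'| ≤ M |T n'|` at the zeros by Bernstein's inequality.
  calc |(derivative p).eval x|
      ≤ M * (derivative (Chebyshev.T ℝ n)).eval x := abs_eval_le_mul_eval_of_degree_lt
        ((chebyshevNode_strictAntiOn n).injOn.mono (by simp))
        (by rw [Finset.card_range]; exact degree_derivative_lt_of_natDegree_le hn hp)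
        (by rw [Finset.card_range]
            exact degree_derivative_lt_of_natDegree_le hn (Chebyshev.natDegree_T ℝ n).le)
        (fun k hk => derivative_T_eval_chebyshevNode_mul_eval_basis_nonneg
          (Finset.mem_range.1 hk) hx)
        (fun k hk => abs_derivative_eval_chebyshevNode_le (Finset.mem_range.1 hk) hp hM)
    _ ≤ M * n ^ 2 := by
        gcongr
        exact (le_abs_self _).trans (abs_derivative_T_eval_le n ⟨(neg_one_le_cos _).trans hx, hx₁⟩)
    _ = n ^ 2 * M := mul_comm _ _

lemma abs_derivative_eval_le_of_abs_le_cos {n : ℕ} (hn : 0 < n) {p : ℝ[X]} (hp : p.natDegree ≤ n)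
    {M : ℝ} (hM : ∀ x ∈ Icc (-1 : ℝ) 1, |p.eval x| ≤ M) {x : ℝ} (hx : |x| ≤ cos (π / (2 * n))) :
    |(derivative p).eval x| ≤ n ^ 2 * M := by
  have hn' : (0 : ℝ) < n := Nat.cast_pos.2 hn
  obtain ⟨hx₁, hx₂⟩ := abs_le.1 (hx.trans (cos_le_one _))
  have hangle : π / (2 * n) ≤ π / 2 := by
    gcongr; linarith [(Nat.one_le_cast (α := ℝ)).2 hn]
  have hjordan : 1 / n ≤ sin (π / (2 * n)) := by
    have := mul_le_sin (by positivity) hangle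
    rwa [show 2 / π * (π / (2 * n)) = 1 / n by field_simp] at this
  have hsin : sin (π / (2 * n)) ≤ sin (arccos x) := by
    rw [sin_arccos, le_sqrt (sin_nonneg_of_nonneg_of_le_pi (by positivity) (by linarith [pi_pos]))
      (by nlinarith), sin_sq]
    nlinarith [sq_abs x, abs_nonneg x]
  have hs₀ : 0 ≤ sin (arccos x) := sin_nonneg_of_nonneg_of_le_pi (arccos_nonneg x) (arccos_le_pi x)
  have hB := abs_derivative_eval_cos_mul_sin_le hn hp hM (arccos x)
  rw [cos_arccos hx₁ hx₂, abs_mul, abs_of_nonneg hs₀] at hB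
  calc |(derivative p).eval x| = n * (|(derivative p).eval x| * (1 / n)) := by field_simp
    _ ≤ n * (|(derivative p).eval x| * sin (arccos x)) := by gcongr; exact hjordan.trans hsin
    _ ≤ n * (n * M) := mul_le_mul_of_nonneg_left hB hn'.le
    _ = n ^ 2 * M := by ring

theorem abs_derivative_eval_le {n : ℕ} {p : ℝ[X]} (hp : p.natDegree ≤ n) {M : ℝ}
    (hM : ∀ x ∈ Icc (-1 : ℝ) 1, |p.eval x| ≤ M) {x : ℝ} (hx : x ∈ Icc (-1 : ℝ) 1) :
    |(derivative p).eval x| ≤ n ^ 2 * M := by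
  rcases Nat.eq_zero_or_pos n with rfl | hn
  · simp [derivative_of_natDegree_zero (Nat.le_zero.1 hp)]
  rcases le_or_gt (cos (π / (2 * n))) x with hx' | hx'
  · exact abs_derivative_eval_le_of_cos_le hn hp hM hx' hx.2
  rcases le_or_gt x (-cos (π / (2 * n))) with hx'' | hx''
  · have hp' : (p.comp (-X)).natDegree ≤ n := by simpa [natDegree_comp] using hp
    have hM' : ∀ y ∈ Icc (-1 : ℝ) 1, |(p.comp (-X)).eval y| ≤ M := fun y hy => by
      simpa using hM (-y) ⟨by linarith [hy.2], by linarith [hy.1]⟩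
    simpa [derivative_comp] using
      abs_derivative_eval_le_of_cos_le hn hp' hM' (x := -x) (by linarith) (by linarith [hx.1])
  · exact abs_derivative_eval_le_of_abs_le_cos hn hp hM (abs_le.2 ⟨hx''.le, hx'.le⟩)

lemma abs_eval_sub_eval_le {n : ℕ} {p : ℝ[X]} (hp : p.natDegree ≤ n) {M : ℝ}
    (hM : ∀ x ∈ Icc (-1 : ℝ) 1, |p.eval x| ≤ M) {x y : ℝ} (hx : x ∈ Icc (-1 : ℝ) 1)
    (hy : y ∈ Icc (-1 : ℝ) 1) : |p.eval x - p.eval y| ≤ n ^ 2 * M * |x - y| := by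
  simpa [Real.norm_eq_abs] using (convex_Icc (-1 : ℝ) 1).norm_image_sub_le_of_norm_hasDerivWithin_le
    (fun z _ => (p.hasDerivAt z).hasDerivWithinAt) (fun z hz => abs_derivative_eval_le hp hM hz)
    hy hx

lemma abs_le_supNormIcc {g : ℝ → ℝ} (hg : BddAbove ((fun x => |g x|) '' Icc (-1 : ℝ) 1)) {x : ℝ}
    (hx : x ∈ Icc (-1 : ℝ) 1) : |g x| ≤ supNormIcc g :=
  le_csSup hg (mem_image_of_mem _ hx)

lemma abs_le_supNormIcc_of_ne_zero {g : ℝ → ℝ} (hg : supNormIcc g ≠ 0) {x : ℝ}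
    (hx : x ∈ Icc (-1 : ℝ) 1) : |g x| ≤ supNormIcc g := by
  refine abs_le_supNormIcc ?_ hx
  contrapose! hg
  exact Real.sSup_of_not_bddAbove hg

lemma ContinuousOn.abs_le_supNormIcc {g : ℝ → ℝ} (hg : ContinuousOn g (Icc (-1 : ℝ) 1)) {x : ℝ}
    (hx : x ∈ Icc (-1 : ℝ) 1) : |g x| ≤ supNormIcc g :=
  _root_.abs_le_supNormIcc (isCompact_Icc.image_of_continuousOn hg.abs).bddAbove hx

lemma ContinuousOn.exists_abs_eq_supNormIcc {g : ℝ → ℝ} (hg : ContinuousOn g (Icc (-1 : ℝ) 1)) :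
    ∃ x₀ ∈ Icc (-1 : ℝ) 1, |g x₀| = supNormIcc g :=
  (isCompact_Icc.image_of_continuousOn hg.abs).sSup_mem ((nonempty_Icc.2 (by norm_num)).image _)

theorem approx_error_eps_dense_general (n d : ℕ) (ε : ℝ) (lam : Fin n → ℝ)
    (hmem : ∀ i, lam i ∈ Set.Icc (-1 : ℝ) 1)
    (hdense : ∀ x ∈ Set.Icc (-1 : ℝ) 1, ∃ i, |x - lam i| ≤ ε)
    (f : ℝ → ℝ) (hf : supNormIcc f = 1)
    (p : Polynomial ℝ) (hpd : p.natDegree ≤ d) :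
    ∑ i, |p.eval (lam i) - f (lam i)| ≥
      supNormIcc (fun x => p.eval x) * (1 - (d : ℝ) ^ 2 * ε) - 1 := by
  set M := supNormIcc fun x => p.eval x
  have hpc : ContinuousOn (fun x => p.eval x) (Icc (-1 : ℝ) 1) := p.continuous.continuousOn
  have hpM : ∀ x ∈ Icc (-1 : ℝ) 1, |p.eval x| ≤ M := fun x hx => hpc.abs_le_supNormIcc hx
  obtain ⟨x₀, hx₀, hpx₀⟩ := hpc.exists_abs_eq_supNormIcc
  obtain ⟨i, hi⟩ := hdense x₀ hx₀
  have hfi : |f (lam i)| ≤ 1 := hf ▸ abs_le_supNormIcc_of_ne_zero (hf ▸ one_ne_zero) (hmem i)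
  have hpi : M - d ^ 2 * M * ε ≤ |p.eval (lam i)| := by
    have hlip := abs_eval_sub_eval_le hpd hpM hx₀ (hmem i)
    have hM₀ : 0 ≤ M := (abs_nonneg _).trans (hpM x₀ hx₀)
    have := mul_le_mul_of_nonneg_left hi (by positivity : (0 : ℝ) ≤ d ^ 2 * M)
    linarith [abs_sub_abs_le_abs_sub (p.eval x₀) (p.eval (lam i))]
  calc M * (1 - d ^ 2 * ε) - 1 ≤ |p.eval (lam i)| - |f (lam i)| := by linarith
    _ ≤ |p.eval (lam i) - f (lam i)| := abs_sub_abs_le_abs_sub _ _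
    _ ≤ ∑ j, |p.eval (lam j) - f (lam j)| :=
      Finset.single_le_sum (f := fun j => |p.eval (lam j) - f (lam j)|)
        (fun j _ => abs_nonneg _) (Finset.mem_univ i)

/-- **Approximation error for ε-dense eigenvalues.**
If the reals `λ₁ ≤ ⋯ ≤ λₙ` in `[-1,1]` are `ε`-dense on `[-1,1]` with `d² ε < 1`,
and `‖f‖∞ = 1`, then for any polynomial `p` of degree at most `d`,
`∑ i, |p(λᵢ) − f(λᵢ)| ≥ ‖p‖∞ (1 − d² ε) − 1`. -/
theorem approx_error_eps_dense (n d : ℕ) (ε : ℝ) (hε : 0 < ε)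
    (hdε : (d : ℝ) ^ 2 * ε < 1)
    (lam : Fin n → ℝ) (hmono : Monotone lam)
    (hmem : ∀ i, lam i ∈ Set.Icc (-1 : ℝ) 1)
    (hdense : ∀ x ∈ Set.Icc (-1 : ℝ) 1, ∃ i, |x - lam i| ≤ ε)
    (f : ℝ → ℝ) (hf : supNormIcc f = 1)
    (p : Polynomial ℝ) (hpd : p.natDegree ≤ d) :
    ∑ i, |p.eval (lam i) - f (lam i)| ≥
      supNormIcc (fun x => p.eval x) * (1 - (d : ℝ) ^ 2 * ε) - 1 :=
  approx_error_eps_dense_general n d ε lam hmem hdense f hf p hpd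
end

section
/- Let Â be a real symmetric n × n matrix, and let U and V be orthogonal n × n matrices with Â U = U diag(λ₁, …, λₙ) and Â V = V diag(λ₁, …, λₙ), where λ₁ ≤ λ₂ ≤ ⋯ ≤ λₙ is the same nondecreasing eigenvalue sequence. Let a < b be indices in {1, …, n+1} such that the interval does not split blocks of equal eigenvalues: (a = 1 or λ_{a−1} < λ_a) and (b = n+1 or λ_{b−1} < λ_b). Then U_{[:, a:b)} U_{[:, a:b)}ᵀ = V_{[:, a:b)} V_{[:, a:b)}ᵀ; i.e., the constant spectral filter built from columns a through b−1 of the eigenvector matrix is invariant to sign changes of eigenvectors and to the choice of orthonormal basis within each eigenspace. -/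
/-!
Write `P` for the diagonal 0/1 matrix selecting the columns `a, …, b - 1`, so that the filter
of `U` is `U P Uᵀ`. Since `U` and `V` both diagonalize `A` with the same `Λ = diag λ`, the
matrix `W = Uᵀ V` commutes with `Λ`, hence `W i j = 0` unless `λ i = λ j`. Because `[a, b)`
is a union of blocks of equal eigenvalues, the diagonal of `P` is constant on these blocks, so
`W` also commutes with `P`, and `V P Vᵀ = U W P Vᵀ = U P W Vᵀ = U P Uᵀ`.
-/

open Matrix

/-- The constant spectral filter `U_{[:, a:b)} U_{[:, a:b)}ᵀ` built from columns
`a, …, b−1` (0-indexed) of `U`, written entrywise as a sum of outer products of the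
selected columns. -/
noncomputable def constFilter (n : ℕ) (U : Matrix (Fin n) (Fin n) ℝ) (a b : ℕ) :
    Matrix (Fin n) (Fin n) ℝ :=
  Matrix.of fun i i' =>
    ∑ j ∈ Finset.univ.filter (fun j : Fin n => a ≤ (j : ℕ) ∧ (j : ℕ) < b),
      U i j * U i' j

lemma constFilter_eq_mul_diagonal_mul_transpose (n : ℕ) (U : Matrix (Fin n) (Fin n) ℝ)
    (a b : ℕ) :
    constFilter n U a b =
      U * diagonal (fun j : Fin n => if (j : ℕ) ∈ Set.Ico a b then 1 else 0) * Uᵀ := by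
  ext i i'
  rw [mul_apply]
  simp only [constFilter, of_apply, mul_diagonal, transpose_apply, Set.mem_Ico,
    mul_ite, ite_mul, mul_one, mul_zero, zero_mul, Finset.sum_filter]

theorem commute_mul_of_intertwine {M : Type*} [Monoid M] {a d u u' v : M}
    (hu'u : u' * u = 1) (huu' : u * u' = 1) (hu : a * u = u * d) (hv : a * v = v * d) :
    Commute (u' * v) d := by
  have hu'a : u' * a = d * u' := by
    calc u' * a = u' * (a * u) * u' := by rw [mul_assoc u', mul_assoc a, huu', mul_one]
      _ = d * u' := by rw [hu, ← mul_assoc, hu'u, one_mul]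
  calc u' * v * d = u' * a * v := by rw [mul_assoc, ← hv, mul_assoc]
    _ = d * (u' * v) := by rw [hu'a, mul_assoc]

theorem Matrix.commute_diagonal_of_commute_diagonal {ι R : Type*} [Fintype ι] [DecidableEq ι]
    [CommRing R] [NoZeroDivisors R] {W : Matrix ι ι R} {lam d : ι → R}
    (hW : Commute W (diagonal lam)) (hd : ∀ i j, lam i = lam j → d i = d j) :
    Commute W (diagonal d) := by
  ext i j
  have hWij : W i j * lam j = lam i * W i j := by
    simpa only [mul_diagonal, diagonal_mul] using congrFun₂ hW.eq i j
  simp only [mul_diagonal, diagonal_mul]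
  by_cases hlam : lam i = lam j
  · rw [hd i j hlam, mul_comm]
  · have hW0 : W i j = 0 := by
      have : W i j * (lam j - lam i) = 0 := by rw [mul_sub, hWij, mul_comm, sub_self]
      exact (mul_eq_zero.mp this).resolve_right (sub_ne_zero.mpr (Ne.symm hlam))
    rw [hW0, mul_zero, zero_mul]

theorem Monotone.lt_iff_lt_of_eq {α : Type*} [Preorder α] {n : ℕ} {lam : Fin n → α}
    (hmono : Monotone lam) {c : ℕ}
    (hc : c = 0 ∨ c = n ∨
      ∃ (h₀ : c - 1 < n) (h₁ : c < n), lam ⟨c - 1, h₀⟩ < lam ⟨c, h₁⟩)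
    {i j : Fin n} (hij : lam i = lam j) : (i : ℕ) < c ↔ (j : ℕ) < c := by
  suffices key : ∀ i j : Fin n, lam i = lam j → (i : ℕ) < c → (j : ℕ) < c from
    ⟨key i j hij, key j i hij.symm⟩
  intro i j hij hi
  by_contra! hj
  rcases hc with rfl | rfl | ⟨h₀, h₁, hgap⟩
  · omega
  · omega
  · have hlt : lam i < lam j :=
      (hmono (Fin.mk_le_mk.mpr (by omega) : i ≤ ⟨c - 1, h₀⟩)).trans_lt
        (hgap.trans_le (hmono (Fin.mk_le_mk.mpr (by omega) : ⟨c, h₁⟩ ≤ j)))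
    exact hlt.ne hij

theorem const_filter_invariant_general (n : ℕ) (A U V : Matrix (Fin n) (Fin n) ℝ)
    (lam : Fin n → ℝ) (hmono : Monotone lam)
    (hU : U * Uᵀ = 1) (hU' : Uᵀ * U = 1)
    (hV : V * Vᵀ = 1)
    (hAU : A * U = U * Matrix.diagonal lam)
    (hAV : A * V = V * Matrix.diagonal lam)
    (a b : ℕ) (hab : a < b) (hb : b ≤ n)
    (ha0 : a = 0 ∨
      lam ⟨a - 1, Nat.lt_of_le_of_lt (Nat.sub_le a 1) (lt_of_lt_of_le hab hb)⟩ <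
        lam ⟨a, lt_of_lt_of_le hab hb⟩)
    (hbn : b = n ∨ ∃ hlt : b < n,
      lam ⟨b - 1, Nat.lt_of_le_of_lt (Nat.sub_le b 1) hlt⟩ < lam ⟨b, hlt⟩) :
    constFilter n U a b = constFilter n V a b := by
  have hIco : ∀ i j : Fin n, lam i = lam j →
      ((i : ℕ) ∈ Set.Ico a b ↔ (j : ℕ) ∈ Set.Ico a b) := fun i j hij => by
    have ha := hmono.lt_iff_lt_of_eq (ha0.imp_right fun h => Or.inr ⟨_, _, h⟩) hij
    have hb := hmono.lt_iff_lt_of_eq (Or.inr (hbn.imp_right fun ⟨_, h⟩ => ⟨_, _, h⟩)) hij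
    simp only [Set.mem_Ico, ← not_lt, ha, hb]
  set P := diagonal (fun j : Fin n => if (j : ℕ) ∈ Set.Ico a b then (1 : ℝ) else 0)
  have hWP : Commute (Uᵀ * V) P :=
    commute_diagonal_of_commute_diagonal (commute_mul_of_intertwine hU' hU hAU hAV)
      fun i j hij => by simp only [hIco i j hij]
  rw [constFilter_eq_mul_diagonal_mul_transpose, constFilter_eq_mul_diagonal_mul_transpose]
  calc U * P * Uᵀ = U * P * (Uᵀ * V) * Vᵀ := by
        rw [mul_assoc _ (Uᵀ * V), mul_assoc Uᵀ, hV, mul_one]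
    _ = U * (Uᵀ * V) * P * Vᵀ := by rw [mul_assoc U P, ← hWP.eq, ← mul_assoc]
    _ = V * P * Vᵀ := by rw [← mul_assoc, hU, one_mul]

/-- **Sign and basis invariance of constant filters.** If `U` and `V` are orthogonal
matrices diagonalizing the symmetric matrix `Â` with the same nondecreasing eigenvalue
sequence `λ`, and the column interval `[a, b)` does not split blocks of equal
eigenvalues, then `U_{[:, a:b)} U_{[:, a:b)}ᵀ = V_{[:, a:b)} V_{[:, a:b)}ᵀ`. -/
theorem const_filter_invariant (n : ℕ) (A U V : Matrix (Fin n) (Fin n) ℝ)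
    (lam : Fin n → ℝ) (hA : A.IsSymm) (hmono : Monotone lam)
    (hU : U * Uᵀ = 1) (hU' : Uᵀ * U = 1)
    (hV : V * Vᵀ = 1) (hV' : Vᵀ * V = 1)
    (hAU : A * U = U * Matrix.diagonal lam)
    (hAV : A * V = V * Matrix.diagonal lam)
    (a b : ℕ) (hab : a < b) (hb : b ≤ n)
    (ha0 : a = 0 ∨
      lam ⟨a - 1, Nat.lt_of_le_of_lt (Nat.sub_le a 1) (lt_of_lt_of_le hab hb)⟩ <
        lam ⟨a, lt_of_lt_of_le hab hb⟩)
    (hbn : b = n ∨ ∃ hlt : b < n,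
      lam ⟨b - 1, Nat.lt_of_le_of_lt (Nat.sub_le b 1) hlt⟩ < lam ⟨b, hlt⟩) :
    constFilter n U a b = constFilter n V a b :=
  const_filter_invariant_general n A U V lam hmono hU hU' hV hAU hAV a b hab hb ha0 hbn
end
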